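/- Let σ be a two-qubit Bell-diagonal state with eigenvalues λ_{00} = 1 − 2Q + λ_{11}, λ_{01} = λ_{10} = Q − λ_{11}, for a parameter λ_{11} ∈ [0, Q] with 0 ≤ Q ≤ 1/2. Then the function λ_{11} ↦ S(X|E) (Eve's conditional von Neumann entropy on Alice's measurement outcome, with E purifying σ) attains its minimum at λ_{11} = Q², and the minimum value equals 1 − h(Q), where h is the binary entropy. -/

import Mathlib

/-!
The eigenvalue distribution `(1 - 2Q + t, Q - t, Q - t, t)` has both marginals equal to
`(1 - Q, Q)`. By Gibbs' inequality its entropy is at most its cross entropy relative to the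
product distribution `(1 - Q, Q) ⊗ (1 - Q, Q)`, and that cross entropy equals `2 h(Q)` for
every `t`. Hence `S(X|E) = 1 + h(Q) - H(λ) ≥ 1 - h(Q)`, with equality when the distribution
is the product one, i.e. at `t = Q²`.
-/

/-- Binary entropy (in bits), `h(x) = −x log₂ x − (1−x) log₂ (1−x)`. -/
noncomputable def binEnt (x : ℝ) : ℝ := -(x * Real.logb 2 x) - (1 - x) * Real.logb 2 (1 - x)

/-- Shannon entropy (in bits) of a four-outcome distribution. -/
noncomputable def ent4 (a b c d : ℝ) : ℝ :=
  -(a * Real.logb 2 a) - b * Real.logb 2 b - c * Real.logb 2 c - d * Real.logb 2 d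

/-- Eve's conditional von Neumann entropy `S(X|E) = S(ρ_{XE}) − S(ρ_E)` for the BB84
Bell-diagonal family with eigenvalues `λ₀₀ = 1−2Q+λ₁₁`, `λ₀₁ = λ₁₀ = Q−λ₁₁`, `λ₁₁ = t`,
where `E` purifies `σ` and `X` is Alice's computational-basis outcome.  For this family
`S(ρ_{XE}) = 1 + h(Q)` and `S(ρ_E) = S(σ)` is the Shannon entropy of the eigenvalues. -/
noncomputable def SXgivenE (Q t : ℝ) : ℝ :=
  1 + binEnt Q - ent4 (1 - 2 * Q + t) (Q - t) (Q - t) t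

open Real

lemma mul_log_sub_mul_log_le {p q : ℝ} (hp : 0 ≤ p) (hq : 0 < q) :
    p * log q - p * log p ≤ q - p := by
  rcases hp.eq_or_lt with rfl | hp
  · simpa using hq.le
  calc p * log q - p * log p = p * log (q / p) := by rw [log_div hq.ne' hp.ne']; ring
    _ ≤ p * (q / p - 1) := by gcongr; exact log_le_sub_one_of_pos (by positivity)
    _ = q - p := by field_simp

lemma mul_logb_sub_mul_logb_le {b p q : ℝ} (hb : 1 < b) (hp : 0 ≤ p) (hq : 0 < q) :
    p * logb b q - p * logb b p ≤ (q - p) / log b := by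
  have hlog : 0 < log b := log_pos hb
  calc p * logb b q - p * logb b p = (p * log q - p * log p) / log b := by
        simp only [logb]; ring
    _ ≤ (q - p) / log b := div_le_div_of_nonneg_right (mul_log_sub_mul_log_le hp hq) hlog.le

lemma ent4_le_crossEntropy {a b c d a' b' c' d' : ℝ}
    (ha : 0 ≤ a) (hb : 0 ≤ b) (hc : 0 ≤ c) (hd : 0 ≤ d)
    (ha' : 0 < a') (hb' : 0 < b') (hc' : 0 < c') (hd' : 0 < d')
    (hsum : a' + b' + c' + d' = a + b + c + d) :
    ent4 a b c d ≤
      -(a * logb 2 a') - b * logb 2 b' - c * logb 2 c' - d * logb 2 d' := by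
  have h2 : (1 : ℝ) < 2 := one_lt_two
  have htotal : ((a' - a) + (b' - b) + (c' - c) + (d' - d)) / log 2 = 0 := by
    rw [show (a' - a) + (b' - b) + (c' - c) + (d' - d) = 0 by linarith, zero_div]
  rw [add_div, add_div, add_div] at htotal
  rw [ent4]
  linarith [mul_logb_sub_mul_logb_le h2 ha ha', mul_logb_sub_mul_logb_le h2 hb hb',
    mul_logb_sub_mul_logb_le h2 hc hc', mul_logb_sub_mul_logb_le h2 hd hd']

lemma crossEntropy_bb84_product {Q : ℝ} (hQ0 : 0 < Q) (hQ1 : Q < 1) (t : ℝ) :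
    -((1 - 2 * Q + t) * logb 2 ((1 - Q) ^ 2)) - (Q - t) * logb 2 (Q * (1 - Q))
      - (Q - t) * logb 2 (Q * (1 - Q)) - t * logb 2 (Q ^ 2) = 2 * binEnt Q := by
  rw [logb_pow, logb_pow, logb_mul hQ0.ne' (sub_pos.2 hQ1).ne', binEnt]
  push_cast
  ring

lemma ent4_bb84_le {Q t : ℝ} (hQ0 : 0 < Q) (hQ1 : Q < 1) (ht0 : 0 ≤ t) (htQ : t ≤ Q)
    (ht1 : 2 * Q - t ≤ 1) :
    ent4 (1 - 2 * Q + t) (Q - t) (Q - t) t ≤ 2 * binEnt Q := by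
  have h1Q : 0 < 1 - Q := sub_pos.2 hQ1
  rw [← crossEntropy_bb84_product hQ0 hQ1 t]
  exact ent4_le_crossEntropy (by linarith) (by linarith) (by linarith) ht0
    (by positivity) (by positivity) (by positivity) (by positivity) (by ring)

lemma ent4_bb84_sq {Q : ℝ} (hQ0 : 0 < Q) (hQ1 : Q < 1) :
    ent4 (1 - 2 * Q + Q ^ 2) (Q - Q ^ 2) (Q - Q ^ 2) (Q ^ 2) = 2 * binEnt Q := by
  rw [← crossEntropy_bb84_product hQ0 hQ1 (Q ^ 2), ent4,
    show 1 - 2 * Q + Q ^ 2 = (1 - Q) ^ 2 by ring, show Q - Q ^ 2 = Q * (1 - Q) by ring]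

/-- BB84 single-photon collective-attack optimization: on `λ₁₁ = t ∈ [0, Q]` the function
`t ↦ S(X|E)` attains its minimum at `t = Q²`, and the minimum value is `1 − h(Q)`. -/
theorem bb84_one_photon_min_uncertainty (Q : ℝ) (hQ0 : 0 ≤ Q) (hQ : Q ≤ 1 / 2) :
    (∀ t ∈ Set.Icc (0 : ℝ) Q, SXgivenE Q (Q ^ 2) ≤ SXgivenE Q t) ∧
    Q ^ 2 ∈ Set.Icc (0 : ℝ) Q ∧
    SXgivenE Q (Q ^ 2) = 1 - binEnt Q := by
  rcases hQ0.eq_or_lt with rfl | hQpos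
  · refine ⟨fun t ht => ?_, by simp, by simp [SXgivenE, binEnt, ent4]⟩
    obtain rfl : t = 0 := le_antisymm ht.2 ht.1
    simp
  have hQ1 : Q < 1 := by linarith
  have hmin : SXgivenE Q (Q ^ 2) = 1 - binEnt Q := by
    rw [SXgivenE, ent4_bb84_sq hQpos hQ1]; ring
  refine ⟨fun t ht => ?_, ⟨sq_nonneg Q, by nlinarith⟩, hmin⟩
  rw [hmin, SXgivenE]
  linarith [ent4_bb84_le hQpos hQ1 ht.1 ht.2 (by linarith [ht.1])]
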